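/- If f is a morphism on finite words over {1,2,3} with f(w) = w, where w is the Arshon sequence, and at least one of f(1), f(2), f(3) is a nonempty word, then all three of f(1), f(2), f(3) are nonempty words. -/

import Mathlib

open List Filter

/-- Image of a letter in an odd (1-based) position under ψ. -/
def oddBlock : ℕ → List ℕ
  | 1 => [1, 2, 3]
  | 2 => [2, 3, 1]
  | 3 => [3, 1, 2]
  | _ => []

/-- Image of a letter in an even (1-based) position under ψ. -/
def evenBlock : ℕ → List ℕ
  | 1 => [3, 2, 1]
  | 2 => [1, 3, 2]
  | 3 => [2, 1, 3]
  | _ => []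

/-- The Arshon map ψ: replace the letter at each odd (1-based) position by its
`oddBlock`, and the letter at each even position by its `evenBlock`. -/
def psi (l : List ℕ) : List ℕ :=
  ((l.zipIdx.map Prod.swap).map fun p => if p.1 % 2 = 0 then oddBlock p.2 else evenBlock p.2).flatten

/-- The Arshon sequence `w = lim ψ^k(1)` as an infinite word: since
`|ψ^[n+1] [1]| = 3^(n+1) > n`, the `n`-th letter (0-based) is well defined. -/
def arshon (n : ℕ) : ℕ := (psi^[n + 1] [1]).getD n 0

/-- A word over the alphabet {1,2,3}. -/
def Word123 (l : List ℕ) : Prop := ∀ a ∈ l, a = 1 ∨ a = 2 ∨ a = 3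

/-- A morphism on finite words over {1,2,3}. -/
def IsMorphism123 (f : List ℕ → List ℕ) : Prop :=
  (∀ u v, f (u ++ v) = f u ++ f v) ∧ ∀ l, Word123 l → Word123 (f l)

/-- `f(w) = w` where `w` is the infinite Arshon word: the image of every finite
prefix of `w` is again a prefix of `w`, and these images have unbounded length
(so that `f(w)` is genuinely the infinite word `w`). -/
def FixesArshon (f : List ℕ → List ℕ) : Prop :=
  (∀ n, f ((List.range n).map arshon)
      = (List.range (f ((List.range n).map arshon)).length).map arshon) ∧
  Tendsto (fun n => (f ((List.range n).map arshon)).length) atTop atTop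

/-- The infinite word `s` is obtained by iterating the morphism `f` on the
letter 1: `f(1)` begins with 1, `|f^k(1)| → ∞`, and `s = lim f^k(1)`. -/
def IterLimit (f : List ℕ → List ℕ) (s : ℕ → ℕ) : Prop :=
  (∃ t, f [1] = 1 :: t) ∧
  Tendsto (fun k => (f^[k] [1]).length) atTop atTop ∧
  ∀ k n, n < (f^[k] [1]).length → (f^[k] [1]).getD n 0 = s n

/-!
Every block `w[3k, 3k+3)` of the Arshon word `w` is a permutation of `123`. Hence if `f(w) = w`,
then `f` maps the `k`-th block onto `w[kL, (k+1)L)`, where `L = |f(1)| + |f(2)| + |f(3)|`. If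
`f(a) = []` but `L > 0`, the image of a block depends only on the order of the two other letters
in it. Seven consecutive blocks with the same such order occur early in `w`, so `w` would contain
a factor of length `7L` with period `L`.

That is impossible. In `ZMod 3` the first differences `d` of `w` satisfy
`d(3k) = d(3k+1) = (-1)^k` and `d(3k+2) = d(k)`. A long period `P` of `d` therefore descends to
`P / 3` when `3 ∣ P`. Otherwise, with `t = ⌊P/3⌋`, it forces `(-1)^k = d(k+t) = (-1)^(k+2t+1)`.
-/

section AppendHom

variable {α β : Type*} {f : List α → List β}

theorem map_nil_of_append_hom (hf : ∀ u v, f (u ++ v) = f u ++ f v) : f [] = [] := by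
  simpa using hf [] []

theorem eq_flatMap_of_append_hom (hf : ∀ u v, f (u ++ v) = f u ++ f v) (l : List α) :
    f l = l.flatMap fun a => f [a] := by
  induction l with
  | nil => exact map_nil_of_append_hom hf
  | cons a l ih => rw [List.flatMap_cons, ← ih, ← hf]; rfl

theorem length_eq_sum_of_append_hom (hf : ∀ u v, f (u ++ v) = f u ++ f v) (l : List α) :
    (f l).length = (l.map fun a => (f [a]).length).sum := by
  rw [eq_flatMap_of_append_hom hf, List.length_flatMap]

theorem filter_ne_of_append_hom [DecidableEq α] (hf : ∀ u v, f (u ++ v) = f u ++ f v) {a : α}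
    (ha : f [a] = []) (l : List α) : f (l.filter (· ≠ a)) = f l := by
  rw [eq_flatMap_of_append_hom hf (l.filter _), eq_flatMap_of_append_hom hf l]
  induction l with
  | nil => rfl
  | cons b l ih => by_cases hb : b = a <;> simp_all

end AppendHom

section Factor

variable {α : Type*}

def factor (x : ℕ → α) (n m : ℕ) : List α := (List.range m).map fun i => x (n + i)

theorem map_range_add (x : ℕ → α) (n m : ℕ) :
    (List.range (n + m)).map x = (List.range n).map x ++ factor x n m := by
  rw [List.range_add, List.map_append, List.map_map]; rfl

theorem image_factor_of_fixed {f : List α → List α} {x : ℕ → α}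
    (hf : ∀ u v, f (u ++ v) = f u ++ f v)
    (hfix : ∀ n, f ((List.range n).map x) = (List.range (f ((List.range n).map x)).length).map x)
    (n m : ℕ) :
    f (factor x n m) = factor x (f ((List.range n).map x)).length (f (factor x n m)).length := by
  have h := hfix (n + m)
  rw [map_range_add, hf, hfix n, List.length_append, List.length_map, List.length_range,
    map_range_add] at h
  exact List.append_cancel_left h

theorem periodic_of_factor_eq {x : ℕ → α} {s L N : ℕ}
    (h : ∀ q < N, factor x (s + q * L) L = factor x (s + q * L + L) L) :
    ∀ n, s ≤ n → n < s + N * L → x (n + L) = x n := by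
  intro n hsn hn
  have hL : 0 < L := Nat.pos_of_ne_zero fun hL => by simp [hL] at hn; omega
  have hn' : n = s + (n - s) / L * L + (n - s) % L := by
    have := Nat.div_add_mod' (n - s) L; omega
  have hr : (n - s) % L < L := Nat.mod_lt _ hL
  have e := congrArg (fun l => l[(n - s) % L]?)
    (h ((n - s) / L) (Nat.div_lt_of_lt_mul (by rw [mul_comm]; omega)))
  simp only [factor, List.getElem?_map, List.getElem?_range hr, Option.map_some,
    Option.some.injEq] at e
  rw [hn', e]
  congr 1
  ring

end Factor

/-- `i` is a 0-based position, so even `i` are the odd positions of `ψ`. -/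
def blockAt (i a : ℕ) : List ℕ := if i % 2 = 0 then oddBlock a else evenBlock a

/-- `ψ` applied to a word whose first letter sits at (0-based) position `i`. -/
def psiFrom : ℕ → List ℕ → List ℕ
  | _, [] => []
  | i, a :: l => blockAt i a ++ psiFrom (i + 1) l

theorem psiFrom_eq_flatten (i : ℕ) (l : List ℕ) :
    psiFrom i l = (((l.zipIdx i).map Prod.swap).map fun p =>
      if p.1 % 2 = 0 then oddBlock p.2 else evenBlock p.2).flatten := by
  induction l generalizing i with
  | nil => rfl
  | cons a l ih => rw [psiFrom, ih]; rfl

theorem psi_eq_psiFrom (l : List ℕ) : psi l = psiFrom 0 l := (psiFrom_eq_flatten 0 l).symm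

theorem psiFrom_append (i : ℕ) (u v : List ℕ) :
    psiFrom i (u ++ v) = psiFrom i u ++ psiFrom (i + u.length) v := by
  induction u generalizing i with
  | nil => simp [psiFrom]
  | cons a u ih => simp [psiFrom, ih, Nat.add_right_comm, Nat.add_assoc]

theorem word123_blockAt (i a : ℕ) : Word123 (blockAt i a) := by
  unfold blockAt
  split <;> rcases a with _ | _ | _ | _ | a <;> simp [Word123, oddBlock, evenBlock]

theorem length_blockAt (i : ℕ) {a : ℕ} (ha : a = 1 ∨ a = 2 ∨ a = 3) :
    (blockAt i a).length = 3 := by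
  unfold blockAt; rcases ha with rfl | rfl | rfl <;> split <;> rfl

theorem blockAt_perm (i : ℕ) {a : ℕ} (ha : a = 1 ∨ a = 2 ∨ a = 3) : blockAt i a ~ [1, 2, 3] := by
  unfold blockAt; rcases ha with rfl | rfl | rfl <;> split <;> decide

theorem word123_psiFrom (i : ℕ) (l : List ℕ) : Word123 (psiFrom i l) := by
  induction l generalizing i with
  | nil => simp [psiFrom, Word123]
  | cons a l ih =>
    intro b hb
    rw [psiFrom, List.mem_append] at hb
    exact hb.elim (word123_blockAt i a b) (ih (i + 1) b)

theorem length_psiFrom (i : ℕ) {l : List ℕ} (hl : Word123 l) :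
    (psiFrom i l).length = 3 * l.length := by
  induction l generalizing i with
  | nil => rfl
  | cons a l ih =>
    rw [psiFrom, List.length_append, length_blockAt i (hl a (by simp)),
      ih (i + 1) fun b hb => hl b (by simp [hb]), List.length_cons]
    ring

theorem getD_psiFrom {l : List ℕ} (hl : Word123 l) (i : ℕ) {k j : ℕ} (hk : k < l.length)
    (hj : j < 3) : (psiFrom i l).getD (3 * k + j) 0 = (blockAt (i + k) (l.getD k 0)).getD j 0 := by
  induction l generalizing i k with
  | nil => simp at hk
  | cons a l ih =>
    have ha := length_blockAt i (hl a (by simp))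
    rw [psiFrom]
    cases k with
    | zero => rw [List.getD_append _ _ _ _ (by omega)]; simp
    | succ k =>
      rw [List.getD_append_right _ _ _ _ (by omega), ha,
        show 3 * (k + 1) + j - 3 = 3 * k + j by omega,
        ih (fun b hb => hl b (by simp [hb])) (i + 1) (by simpa using hk)]
      simp [Nat.add_right_comm, Nat.add_assoc]

theorem word123_iterate_psi (m : ℕ) : Word123 (psi^[m] [1]) := by
  cases m with
  | zero => simp [Word123]
  | succ m => rw [Function.iterate_succ_apply', psi_eq_psiFrom]; exact word123_psiFrom 0 _

theorem length_iterate_psi (m : ℕ) : (psi^[m] [1]).length = 3 ^ m := by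
  induction m with
  | zero => rfl
  | succ m ih =>
    rw [Function.iterate_succ_apply', psi_eq_psiFrom, length_psiFrom 0 (word123_iterate_psi m), ih]
    ring

theorem psi_prefix {u v : List ℕ} (h : u <+: v) : psi u <+: psi v := by
  obtain ⟨t, rfl⟩ := h
  rw [psi_eq_psiFrom, psi_eq_psiFrom, psiFrom_append]
  exact List.prefix_append _ _

theorem iterate_psi_prefix_succ (m : ℕ) : psi^[m] [1] <+: psi^[m + 1] [1] := by
  induction m with
  | zero => exact ⟨[2, 3], rfl⟩
  | succ m ih =>
    rw [Function.iterate_succ_apply', Function.iterate_succ_apply' _ (m + 1)]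
    exact psi_prefix ih

theorem iterate_psi_prefix {m m' : ℕ} (h : m ≤ m') : psi^[m] [1] <+: psi^[m'] [1] := by
  induction m', h using Nat.le_induction with
  | base => exact List.prefix_refl _
  | succ m' _ ih => exact ih.trans (iterate_psi_prefix_succ m')

theorem getD_eq_of_prefix {α : Type*} {l₁ l₂ : List α} (h : l₁ <+: l₂) {n : ℕ}
    (hn : n < l₁.length) (d : α) : l₁.getD n d = l₂.getD n d := by
  obtain ⟨t, rfl⟩ := h
  exact (List.getD_append _ _ _ _ hn).symm

theorem arshon_eq_getD {m n : ℕ} (hn : n < 3 ^ m) : arshon n = (psi^[m] [1]).getD n 0 := by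
  have key {a b : ℕ} (hab : a ≤ b) (ha : n < 3 ^ a) :
      (psi^[a] [1]).getD n 0 = (psi^[b] [1]).getD n 0 :=
    getD_eq_of_prefix (iterate_psi_prefix hab) (by rwa [length_iterate_psi]) 0
  have hn' : n < 3 ^ (n + 1) := (Nat.lt_succ_self n).trans (Nat.lt_pow_self (by norm_num))
  rw [arshon]
  rcases le_total m (n + 1) with h | h
  · exact (key h hn).symm
  · exact key h hn'

theorem arshon_mem (n : ℕ) : arshon n = 1 ∨ arshon n = 2 ∨ arshon n = 3 := by
  have hn : n < (psi^[n + 1] [1]).length := by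
    rw [length_iterate_psi]; exact (Nat.lt_succ_self n).trans (Nat.lt_pow_self (by norm_num))
  rw [arshon, List.getD_eq_getElem _ _ hn]
  exact word123_iterate_psi _ _ (List.getElem_mem hn)

theorem arshon_three_mul_add (k : ℕ) {j : ℕ} (hj : j < 3) :
    arshon (3 * k + j) = (blockAt k (arshon k)).getD j 0 := by
  have hk : k < 3 ^ (k + 1) := (Nat.lt_succ_self k).trans (Nat.lt_pow_self (by norm_num))
  have hkj : 3 * k + j < 3 ^ (k + 2) := by rw [pow_succ]; omega
  rw [arshon_eq_getD hkj, Function.iterate_succ_apply', psi_eq_psiFrom,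
    getD_psiFrom (word123_iterate_psi _) 0 (by rwa [length_iterate_psi]) hj,
    ← arshon_eq_getD hk, zero_add]

theorem arshon_three_mul_add_cast (k : ℕ) {j : ℕ} (hj : j < 3) :
    (arshon (3 * k + j) : ZMod 3) = arshon k + 1 + (-1) ^ k * ((j : ZMod 3) - 1) := by
  rw [arshon_three_mul_add k hj, blockAt]
  rcases Nat.even_or_odd k with hk | hk
  · rw [hk.neg_one_pow, if_pos (Nat.even_iff.mp hk)]
    rcases arshon_mem k with h | h | h <;> rw [h] <;> interval_cases j <;> decide
  · rw [hk.neg_one_pow, if_neg (Nat.not_even_iff_odd.mpr hk ∘ Nat.even_iff.mpr)]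
    rcases arshon_mem k with h | h | h <;> rw [h] <;> interval_cases j <;> decide

def arshonDiff (n : ℕ) : ZMod 3 := arshon (n + 1) - arshon n

theorem arshonDiff_three_mul (k : ℕ) : arshonDiff (3 * k) = (-1) ^ k := by
  have h0 := arshon_three_mul_add_cast k (j := 0) (by norm_num)
  rw [arshonDiff, arshon_three_mul_add_cast k (j := 1) (by norm_num), ← add_zero (3 * k), h0]
  push_cast; ring

theorem arshonDiff_three_mul_add_one (k : ℕ) : arshonDiff (3 * k + 1) = (-1) ^ k := by
  rw [arshonDiff, arshon_three_mul_add_cast k (j := 2) (by norm_num),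
    arshon_three_mul_add_cast k (j := 1) (by norm_num)]
  push_cast; ring

theorem arshonDiff_three_mul_add_two (k : ℕ) : arshonDiff (3 * k + 2) = arshonDiff k := by
  rw [arshonDiff, arshonDiff, show 3 * k + 2 + 1 = 3 * (k + 1) + 0 by ring,
    arshon_three_mul_add_cast (k + 1) (by norm_num), arshon_three_mul_add_cast k (by norm_num)]
  push_cast; ring

theorem neg_one_pow_ne_neg_one_pow_add_odd (k t : ℕ) :
    ((-1 : ZMod 3)) ^ k ≠ (-1) ^ (k + 2 * t + 1) := by
  rw [pow_succ, pow_add, pow_mul, neg_one_sq, one_pow, mul_one]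
  rcases neg_one_pow_eq_or (ZMod 3) k with h | h <;> rw [h] <;> decide

theorem arshonDiff_not_periodic (P : ℕ) (hP : 0 < P) (s : ℕ) :
    ¬ ∀ n, s ≤ n → n < s + 5 * P → arshonDiff (n + P) = arshonDiff n := by
  induction P using Nat.strong_induction_on generalizing s with
  | _ P ih =>
  intro h
  obtain ⟨t, rfl | rfl | rfl⟩ : ∃ t, P = 3 * t ∨ P = 3 * t + 1 ∨ P = 3 * t + 2 := ⟨P / 3, by omega⟩
  · refine ih t (by omega) (by omega) (s / 3) fun n hsn hn => ?_
    have e := h (3 * n + 2) (by omega) (by omega)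
    rwa [show 3 * n + 2 + 3 * t = 3 * (n + t) + 2 by ring, arshonDiff_three_mul_add_two,
      arshonDiff_three_mul_add_two] at e
  · have e₁ := h (3 * ((s + 2) / 3) + 1) (by omega) (by omega)
    have e₂ := h (3 * ((s + 2) / 3 + t) + 2) (by omega) (by omega)
    rw [show 3 * ((s + 2) / 3) + 1 + (3 * t + 1) = 3 * ((s + 2) / 3 + t) + 2 by ring,
      arshonDiff_three_mul_add_two, arshonDiff_three_mul_add_one] at e₁
    rw [show 3 * ((s + 2) / 3 + t) + 2 + (3 * t + 1) = 3 * ((s + 2) / 3 + 2 * t + 1) by ring,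
      arshonDiff_three_mul, arshonDiff_three_mul_add_two] at e₂
    exact neg_one_pow_ne_neg_one_pow_add_odd _ t (e₁.symm.trans e₂.symm)
  · have e₁ := h (3 * ((s + 2) / 3)) (by omega) (by omega)
    have e₂ := h (3 * ((s + 2) / 3 + t) + 2) (by omega) (by omega)
    rw [show 3 * ((s + 2) / 3) + (3 * t + 2) = 3 * ((s + 2) / 3 + t) + 2 by ring,
      arshonDiff_three_mul_add_two, arshonDiff_three_mul] at e₁
    rw [show 3 * ((s + 2) / 3 + t) + 2 + (3 * t + 2) = 3 * ((s + 2) / 3 + 2 * t + 1) + 1 by ring,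
      arshonDiff_three_mul_add_one, arshonDiff_three_mul_add_two] at e₂
    exact neg_one_pow_ne_neg_one_pow_add_odd _ t (e₁.symm.trans e₂.symm)

theorem arshon_not_periodic (P : ℕ) (hP : 0 < P) (s : ℕ) :
    ¬ ∀ n, s ≤ n → n < s + 6 * P → arshon (n + P) = arshon n := by
  refine fun h => arshonDiff_not_periodic P hP s fun n hsn hn => ?_
  rw [arshonDiff, arshonDiff, h n hsn (by omega), show n + P + 1 = n + 1 + P by ring,
    h (n + 1) (by omega) (by omega)]

theorem factor_arshon_three_mul (k : ℕ) : factor arshon (3 * k) 3 = blockAt k (arshon k) := by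
  refine List.ext_getElem (by simp [factor, length_blockAt k (arshon_mem k)]) fun j hj hj' => ?_
  simp only [factor, List.length_map, List.length_range] at hj
  simp [factor, arshon_three_mul_add k hj, List.getElem?_eq_getElem hj']

theorem length_image_factor_arshon {f : List ℕ → List ℕ} (hf : ∀ u v, f (u ++ v) = f u ++ f v)
    (k : ℕ) :
    (f (factor arshon (3 * k) 3)).length = (f [1]).length + (f [2]).length + (f [3]).length := by
  rw [length_eq_sum_of_append_hom hf, factor_arshon_three_mul,
    ((blockAt_perm k (arshon_mem k)).map _).sum_eq]
  simp [add_assoc]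

theorem image_factor_arshon {f : List ℕ → List ℕ} (hf : ∀ u v, f (u ++ v) = f u ++ f v)
    (hfix : ∀ n, f ((List.range n).map arshon)
      = (List.range (f ((List.range n).map arshon)).length).map arshon) (k : ℕ) :
    f (factor arshon (3 * k) 3) = factor arshon (k * ((f [1]).length + (f [2]).length +
      (f [3]).length)) ((f [1]).length + (f [2]).length + (f [3]).length) := by
  have hlen (k : ℕ) : (f ((List.range (3 * k)).map arshon)).length
      = k * ((f [1]).length + (f [2]).length + (f [3]).length) := by
    induction k with
    | zero => simp [map_nil_of_append_hom hf]
    | succ k ih =>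
      rw [show 3 * (k + 1) = 3 * k + 3 by ring, map_range_add, hf, List.length_append, ih,
        length_image_factor_arshon hf]
      ring
  rw [image_factor_of_fixed hf hfix, hlen, length_image_factor_arshon hf]

theorem factor_arshon_eq_getD {n m : ℕ} (h : n + m ≤ 81) :
    factor arshon n m = factor (fun i => (psi^[4] [1]).getD i 0) n m :=
  List.map_congr_left fun i hi => arshon_eq_getD (by simp at hi; norm_num; omega)

/-- With `a` erased, the blocks `k₀, …, k₀ + 6` read `32` for `a = 1` (`k₀ = 1`), `31` for
`a = 2` (`k₀ = 10`) and `21` for `a = 3` (`k₀ = 19`). -/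
theorem exists_seven_blocks_eq_filter_ne {a : ℕ} (ha : a = 1 ∨ a = 2 ∨ a = 3) :
    ∃ k₀, ∀ q < 6, (factor arshon (3 * (k₀ + q)) 3).filter (· ≠ a)
      = (factor arshon (3 * (k₀ + q + 1)) 3).filter (· ≠ a) := by
  rcases ha with rfl | rfl | rfl <;> [use 1; use 10; use 19] <;> intro q hq <;>
    rw [factor_arshon_eq_getD (by omega), factor_arshon_eq_getD (by omega)] <;>
    revert q <;> decide +kernel

/-- If `f` is a morphism on words over {1,2,3} with `f(w) = w` (`w` the Arshon
sequence) and at least one of `f(1), f(2), f(3)` is nonempty, then all three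
are nonempty. -/
theorem arshon_fixing_morphism_all_nonempty
    (f : List ℕ → List ℕ) (hf : IsMorphism123 f) (hfix : FixesArshon f)
    (h : f [1] ≠ [] ∨ f [2] ≠ [] ∨ f [3] ≠ []) :
    f [1] ≠ [] ∧ f [2] ≠ [] ∧ f [3] ≠ [] := by
  obtain ⟨hf, -⟩ := hf
  obtain ⟨hfix, -⟩ := hfix
  have hL : 0 < (f [1]).length + (f [2]).length + (f [3]).length := by
    rcases h with h | h | h <;> have := List.length_pos_iff.mpr h <;> omega
  have key {a : ℕ} (ha : a = 1 ∨ a = 2 ∨ a = 3) : f [a] ≠ [] := by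
    intro hfa
    obtain ⟨k₀, hrun⟩ := exists_seven_blocks_eq_filter_ne ha
    refine arshon_not_periodic _ hL (k₀ * ((f [1]).length + (f [2]).length + (f [3]).length))
      (periodic_of_factor_eq fun q hq => ?_)
    rw [← add_mul, ← add_one_mul, ← image_factor_arshon hf hfix, ← image_factor_arshon hf hfix,
      ← filter_ne_of_append_hom hf hfa, hrun q hq, filter_ne_of_append_hom hf hfa]
  exact ⟨key (by simp), key (by simp), key (by simp)⟩
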